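/- arXiv:0802.4381 — 3 statements merged into one kernel-verified Lean document; each statement's English description precedes it below -/
import Mathlib

section
/- Let U be a compact subset of ℝ^d, let f : U → ℝ^p be continuous, and let ξ_D be a Borel probability measure on U whose information matrix M(ξ_D) is invertible. Then ξ_D is D-optimal, i.e. it maximizes det M(ξ) over all Borel probability measures ξ on U, if and only if sup_{u ∈ U} d(u, ξ_D) = p, where d(u, ξ) = f(u)ᵀ M(ξ)⁻¹ f(u). -/
/-!
Everything rests on the identity `tr (M(ξD)⁻¹ M(ξ)) = ∫ d(u, ξD) ξ(du)`. For `ξ = ξD` it gives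
`∫ d(·, ξD) dξD = p`, so `sup d(·, ξD) ≥ p` always. If `d(·, ξD) ≤ p`, then
`tr (M(ξD)⁻¹ M(ξ)) ≤ p` for every design `ξ`, and AM–GM for the eigenvalues of
`M(ξD)^{-1/2} M(ξ) M(ξD)^{-1/2}` gives `det M(ξ) ≤ det M(ξD)`. Conversely, if `d(u, ξD) > p`,
the matrix determinant lemma shows that moving mass `t` from `ξD` to `δ_u` multiplies
`det M` by `(1 - t)^p (1 + t / (1 - t) · d(u, ξD))`, whose derivative at `t = 0` is
`d(u, ξD) - p > 0`; so `ξD` is not D-optimal.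
-/

open MeasureTheory Matrix

/-- Information matrix `M(ξ) = ∫ f(u) f(u)ᵀ ξ(du)` (defined entrywise). -/
noncomputable def infoMatrix {d p : ℕ} {U : Set (Fin d → ℝ)}
    (f : U → Fin p → ℝ) (ξ : Measure U) : Matrix (Fin p) (Fin p) ℝ :=
  Matrix.of fun i j => ∫ u, f u i * f u j ∂ξ

/-- Variance function `d(u, ξ) = f(u)ᵀ M(ξ)⁻¹ f(u)`. -/
noncomputable def varFun {d p : ℕ} {U : Set (Fin d → ℝ)}
    (f : U → Fin p → ℝ) (ξ : Measure U) (u : U) : ℝ :=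
  f u ⬝ᵥ (infoMatrix f ξ)⁻¹.mulVec (f u)

open Filter Topology Set
open scoped NNReal

lemma Real.prod_le_arith_mean_pow {ι : Type*} [Fintype ι] {z : ι → ℝ} (hz : ∀ i, 0 ≤ z i) :
    ∏ i, z i ≤ ((∑ i, z i) / Fintype.card ι) ^ Fintype.card ι := by
  rcases isEmpty_or_nonempty ι with _ | _
  · simp
  have hcard : (0 : ℝ) < Fintype.card ι := by exact_mod_cast Fintype.card_pos
  have amgm := Real.geom_mean_le_arith_mean Finset.univ (fun _ ↦ 1) z (fun _ _ ↦ zero_le_one)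
    (by simpa using hcard) (fun i _ ↦ hz i)
  simp only [Real.rpow_one, one_mul, Finset.sum_const, Finset.card_univ, nsmul_eq_mul,
    mul_one] at amgm
  calc ∏ i, z i = ((∏ i, z i) ^ (Fintype.card ι : ℝ)⁻¹) ^ Fintype.card ι := by
        rw [← Real.rpow_natCast, ← Real.rpow_mul (Finset.prod_nonneg fun i _ ↦ hz i),
          inv_mul_cancel₀ hcard.ne', Real.rpow_one]
    _ ≤ _ := pow_le_pow_left₀
          (Real.rpow_nonneg (Finset.prod_nonneg fun i _ ↦ hz i) _) amgm _

lemma Continuous.integrable_of_compactSpace {X E : Type*} [TopologicalSpace X]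
    [MeasurableSpace X] [OpensMeasurableSpace X] [CompactSpace X] [NormedAddCommGroup E]
    {μ : Measure X} [IsFiniteMeasure μ] {g : X → E} (hg : Continuous g) : Integrable g μ :=
  hg.integrable_of_hasCompactSupport (.of_compactSpace g)

lemma HasDerivAt.eventually_nhdsGT_lt {f : ℝ → ℝ} {f' x : ℝ} (h : HasDerivAt f f' x)
    (hf' : 0 < f') : ∀ᶠ y in 𝓝[>] x, f x < f y := by
  filter_upwards [(hasDerivAt_iff_tendsto_slope.mp h).mono_left (nhdsGT_le_nhdsNE x)
    |>.eventually (eventually_gt_nhds hf'), self_mem_nhdsWithin] with y hslope hy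
  exact (slope_pos_iff_of_le (le_of_lt hy)).mp hslope

lemma exists_one_lt_one_sub_pow_mul_one_add_div {D : ℝ} (p : ℕ) (hD : (p : ℝ) < D) :
    ∃ t ∈ Ioo (0 : ℝ) 1, 1 < (1 - t) ^ p * (1 + t / (1 - t) * D) := by
  have hderiv : HasDerivAt (fun t : ℝ ↦ (1 - t) ^ p * (1 + t / (1 - t) * D)) (D - p) 0 := by
    have h1 : HasDerivAt (fun t : ℝ ↦ 1 - t) (-1) 0 := (hasDerivAt_id' 0).const_sub 1
    have h2 := (((hasDerivAt_id' 0).fun_div h1 (by norm_num)).mul_const D).const_add 1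
    exact ((h1.fun_pow p).mul h2).congr_deriv (by ring)
  obtain ⟨t, ht, hlt⟩ := ((hderiv.eventually_nhdsGT_lt (sub_pos.mpr hD)).and
    (Ioo_mem_nhdsGT one_pos)).exists
  exact ⟨t, hlt, by simpa using ht⟩

namespace Matrix
variable {n : Type*} [Fintype n] [DecidableEq n]

lemma PosSemidef.det_le_trace_div_card_pow {C : Matrix n n ℝ} (hC : C.PosSemidef) :
    C.det ≤ (C.trace / Fintype.card n) ^ Fintype.card n := by
  rw [hC.1.det_eq_prod_eigenvalues, hC.1.trace_eq_sum_eigenvalues]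
  simpa using Real.prod_le_arith_mean_pow hC.eigenvalues_nonneg

open scoped MatrixOrder in
lemma PosDef.det_le_of_trace_inv_mul_le {A B : Matrix n n ℝ} (hA : A.PosDef)
    (hB : B.PosSemidef) (h : (A⁻¹ * B).trace ≤ Fintype.card n) : B.det ≤ A.det := by
  set T := CFC.sqrt A⁻¹
  have hT : T.IsHermitian := (CFC.sqrt_nonneg A⁻¹).posSemidef.1
  have hTT : T * T = A⁻¹ := CFC.sqrt_mul_sqrt_self _ hA.inv.posSemidef.nonneg
  have hC : (T * B * T).PosSemidef := by
    simpa only [hT.eq] using hB.mul_mul_conjTranspose_same T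
  have htr : (T * B * T).trace = (A⁻¹ * B).trace := by
    rw [trace_mul_cycle, hTT]
  have hdet : (T * B * T).det = B.det / A.det := by
    rw [det_mul, det_mul, mul_right_comm, ← det_mul, hTT, det_nonsing_inv,
      Ring.inverse_eq_inv', div_eq_inv_mul]
  have hC1 : (T * B * T).det ≤ 1 := hC.det_le_trace_div_card_pow.trans <|
    pow_le_one₀ (by positivity [hC.trace_nonneg]) (div_le_one_of_le₀ (htr ▸ h) (by positivity))
  rwa [hdet, div_le_one hA.det_pos] at hC1

lemma det_one_sub_smul_add_smul_vecMulVec {A : Matrix n n ℝ} (hA : IsUnit A.det) (v : n → ℝ)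
    {t : ℝ} (ht : t ≠ 1) :
    ((1 - t) • A + t • vecMulVec v v).det
      = A.det * ((1 - t) ^ Fintype.card n * (1 + t / (1 - t) * (v ⬝ᵥ A⁻¹ *ᵥ v))) := by
  have h1t : 1 - t ≠ 0 := sub_ne_zero.mpr ht.symm
  have hsplit : (1 - t) • A + t • vecMulVec v v
      = (1 - t) • (A + replicateCol Unit ((t / (1 - t)) • v) * replicateRow Unit v) := by
    rw [replicateCol_smul, Matrix.smul_mul, ← vecMulVec_eq, smul_add, smul_smul,
      mul_div_cancel₀ _ h1t]
  rw [hsplit, det_smul, det_add_replicateCol_mul_replicateRow hA,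
    det_unique (1 + replicateRow Unit v * A⁻¹ * replicateCol Unit ((t / (1 - t)) • v)),
    add_apply, one_apply_eq, Matrix.mul_assoc, ← replicateCol_mulVec,
    replicateRow_mul_replicateCol_apply, mulVec_smul, dotProduct_smul, smul_eq_mul]
  ring

end Matrix

def IsDOptimal {d p : ℕ} {U : Set (Fin d → ℝ)} (f : U → Fin p → ℝ) (ξD : Measure U) : Prop :=
  ∀ ξ : Measure U, IsProbabilityMeasure ξ → (infoMatrix f ξ).det ≤ (infoMatrix f ξD).det

section Design

variable {d p : ℕ} {U : Set (Fin d → ℝ)} {f : U → Fin p → ℝ}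

lemma infoMatrix_smul_measure (c : ℝ≥0) (ξ : Measure U) :
    infoMatrix f (c • ξ) = (c : ℝ) • infoMatrix f ξ := by
  ext i j
  exact integral_smul_nnreal_measure _ c

lemma infoMatrix_dirac (u : U) : infoMatrix f (Measure.dirac u) = vecMulVec (f u) (f u) := by
  ext i j
  exact integral_dirac _ u

lemma continuous_varFun (hf : Continuous f) (ξ : Measure U) : Continuous (varFun f ξ) :=
  hf.dotProduct (continuous_const.matrix_mulVec hf)

variable [CompactSpace U]

lemma infoMatrix_add_measure (hf : Continuous f) (μ ν : Measure U) [IsFiniteMeasure μ]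
    [IsFiniteMeasure ν] : infoMatrix f (μ + ν) = infoMatrix f μ + infoMatrix f ν := by
  ext i j
  have hc : Continuous fun u ↦ f u i * f u j := by fun_prop
  exact integral_add_measure hc.integrable_of_compactSpace hc.integrable_of_compactSpace

lemma trace_mul_infoMatrix (hf : Continuous f) (ξ : Measure U) [IsFiniteMeasure ξ]
    (B : Matrix (Fin p) (Fin p) ℝ) :
    (B * infoMatrix f ξ).trace = ∫ u, f u ⬝ᵥ B *ᵥ f u ∂ξ := by
  have hint : ∀ i j, Integrable (fun u ↦ f u i * (B i j * f u j)) ξ := fun i j ↦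
    (by fun_prop : Continuous _).integrable_of_compactSpace
  simp only [dotProduct, mulVec, Finset.mul_sum]
  rw [integral_finsetSum _ fun i _ ↦ integrable_finsetSum _ fun j _ ↦ hint i j]
  refine Finset.sum_congr rfl fun i _ ↦ ?_
  rw [integral_finsetSum _ fun j _ ↦ hint i j, diag_apply, mul_apply]
  refine Finset.sum_congr rfl fun j _ ↦ ?_
  rw [infoMatrix, of_apply, ← integral_const_mul]
  exact integral_congr_ae (.of_forall fun u ↦ by ring)

lemma posSemidef_infoMatrix (hf : Continuous f) (ξ : Measure U) [IsFiniteMeasure ξ] :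
    (infoMatrix f ξ).PosSemidef := by
  refine .of_dotProduct_mulVec_nonneg ?_ fun x ↦ ?_
  · ext i j
    simp only [infoMatrix, conjTranspose_apply, of_apply, star_trivial, mul_comm]
  · have hquad : star x ⬝ᵥ infoMatrix f ξ *ᵥ x = (vecMulVec x x * infoMatrix f ξ).trace := by
      simp only [star_trivial, dotProduct, mulVec, trace, diag_apply, mul_apply, vecMulVec_apply,
        Finset.mul_sum, infoMatrix, of_apply]
      refine Finset.sum_congr rfl fun i _ ↦ Finset.sum_congr rfl fun j _ ↦ ?_
      simp only [mul_comm]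
      ring
    rw [hquad, trace_mul_infoMatrix hf]
    refine integral_nonneg fun u ↦ ?_
    rw [vecMulVec_mulVec, op_smul_eq_smul, dotProduct_smul, smul_eq_mul, dotProduct_comm]
    exact mul_self_nonneg _

lemma integral_varFun (hf : Continuous f) (ξD ξ : Measure U) [IsFiniteMeasure ξ] :
    ∫ u, varFun f ξD u ∂ξ = ((infoMatrix f ξD)⁻¹ * infoMatrix f ξ).trace :=
  (trace_mul_infoMatrix hf ξ _).symm

lemma integral_varFun_self (hf : Continuous f) (ξ : Measure U) [IsFiniteMeasure ξ]
    (h : IsUnit (infoMatrix f ξ).det) : ∫ u, varFun f ξ u ∂ξ = p := by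
  rw [integral_varFun hf, nonsing_inv_mul _ h, trace_one, Fintype.card_fin]

lemma natCast_le_iSup_varFun (hf : Continuous f) (ξ : Measure U) [IsProbabilityMeasure ξ]
    (h : IsUnit (infoMatrix f ξ).det) : (p : ℝ) ≤ ⨆ u, varFun f ξ u := by
  have hbdd := (isCompact_range (continuous_varFun hf ξ)).bddAbove
  calc (p : ℝ) = ∫ u, varFun f ξ u ∂ξ := (integral_varFun_self hf ξ h).symm
    _ ≤ ∫ _, ⨆ u, varFun f ξ u ∂ξ :=
      integral_mono (continuous_varFun hf ξ).integrable_of_compactSpace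
        (integrable_const _) fun u ↦ le_ciSup hbdd u
    _ = ⨆ u, varFun f ξ u := by simp

lemma isDOptimal_of_varFun_le (hf : Continuous f) {ξD : Measure U}
    (hD : (infoMatrix f ξD).PosDef) (h : ∀ u, varFun f ξD u ≤ p) : IsDOptimal f ξD := by
  intro ξ _
  refine hD.det_le_of_trace_inv_mul_le (posSemidef_infoMatrix hf ξ) ?_
  rw [← integral_varFun hf, Fintype.card_fin]
  calc ∫ u, varFun f ξD u ∂ξ ≤ ∫ _, (p : ℝ) ∂ξ :=
        integral_mono (continuous_varFun hf ξD).integrable_of_compactSpace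
          (integrable_const _) h
    _ = p := by simp

lemma varFun_le_of_isDOptimal (hf : Continuous f) {ξD : Measure U} [IsProbabilityMeasure ξD]
    (hinv : IsUnit (infoMatrix f ξD).det) (hopt : IsDOptimal f ξD) (u : U) :
    varFun f ξD u ≤ p := by
  by_contra! hlt
  obtain ⟨t, ⟨ht0, ht1⟩, hgt⟩ := exists_one_lt_one_sub_pow_mul_one_add_div p hlt
  set ξ := (1 - t).toNNReal • ξD + t.toNNReal • Measure.dirac u
  have hξ : IsProbabilityMeasure ξ := ⟨by
    simp only [ξ, Measure.coe_add, Measure.coe_smul, Pi.add_apply, Pi.smul_apply, measure_univ]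
    rw [← add_smul, ← Real.toNNReal_add (sub_nonneg.mpr ht1.le) ht0.le, sub_add_cancel,
      Real.toNNReal_one, one_smul]⟩
  have hM : infoMatrix f ξ = (1 - t) • infoMatrix f ξD + t • vecMulVec (f u) (f u) := by
    rw [infoMatrix_add_measure hf, infoMatrix_smul_measure, infoMatrix_smul_measure,
      infoMatrix_dirac, Real.coe_toNNReal _ (sub_nonneg.mpr ht1.le), Real.coe_toNNReal _ ht0.le]
  have hpos : 0 < (infoMatrix f ξD).det :=
    (posSemidef_infoMatrix hf ξD).det_nonneg.lt_of_ne' hinv.ne_zero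
  refine (hopt ξ hξ).not_gt ?_
  rw [hM, det_one_sub_smul_add_smul_vecMulVec hinv _ ht1.ne, Fintype.card_fin]
  exact lt_mul_of_one_lt_right hpos hgt

end Design

/-- Kiefer–Wolfowitz Equivalence Theorem, (1) ⇔ (2): a design `ξD` with invertible
information matrix is D-optimal iff `sup_{u ∈ U} d(u, ξD) = p`. -/
theorem kieferWolfowitz_Doptimal_iff_sup_varFun_eq
    {d p : ℕ} (U : Set (Fin d → ℝ)) (hU : IsCompact U)
    (f : U → Fin p → ℝ) (hf : Continuous f)
    (ξD : Measure U) (hprob : IsProbabilityMeasure ξD)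
    (hinv : IsUnit (infoMatrix f ξD).det) :
    (∀ ξ : Measure U, IsProbabilityMeasure ξ →
        (infoMatrix f ξ).det ≤ (infoMatrix f ξD).det)
      ↔ (⨆ u : U, varFun f ξD u) = p := by
  have : CompactSpace U := isCompact_iff_compactSpace.mp hU
  have : Nonempty U := nonempty_of_isProbabilityMeasure ξD
  have hbdd := (isCompact_range (continuous_varFun hf ξD)).bddAbove
  refine ⟨fun hopt ↦ ?_, fun hsup ↦ ?_⟩
  · exact le_antisymm (ciSup_le (varFun_le_of_isDOptimal hf hinv hopt))
      (natCast_le_iSup_varFun hf ξD hinv)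
  · refine isDOptimal_of_varFun_le hf ?_ fun u ↦ hsup ▸ le_ciSup hbdd u
    exact (posSemidef_infoMatrix hf ξD).posDef_iff_det_ne_zero.mpr hinv.ne_zero
end

section
/- Let f₁, …, f_m ∈ ℝ^p, let λ₁, …, λ_m ≥ 0 with ∑ λ_i = 1, and let w_i > 0 and σ_i > 0 for each i. Define M₁ = ∑_i λ_i w_i f_i f_iᵀ, M₂ = ∑_i λ_i w_i² σ_i² f_i f_iᵀ, and M = ∑_i λ_i σ_i⁻² f_i f_iᵀ, and assume M₁ and M are invertible. Then the matrix C = M₁⁻¹ M₂ M₁⁻¹ satisfies: C − M⁻¹ is positive semidefinite; moreover, if w_i = c σ_i⁻² for all i and some constant c > 0, then C = M⁻¹. -/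
/-! With `F` the matrix whose rows are the `fᵢ`, `Λ = diag λ`, `S = diag (wᵢσᵢ)` and
`T = diag σᵢ⁻¹`, one has `M₁ = FᵀΛSTF`, `M₂ = FᵀΛS²F` and `M = FᵀΛT²F`. Expanding
`BᵀΛB` for `B = SFM₁⁻¹ − TFM⁻¹`, both cross terms collapse to `M⁻¹`, so
`M₁⁻¹M₂M₁⁻¹ − M⁻¹ = BᵀΛB`, which is positive semidefinite as `λ ≥ 0`.
When `wᵢ = c σᵢ⁻²`, `M₁ = cM` and `M₂ = cM₁`, and the sandwich collapses to `M⁻¹`. -/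

open Matrix

namespace Matrix

variable {ι n R : Type*} [Fintype ι] [DecidableEq ι]

lemma sum_smul_vecMulVec_self_eq [CommSemiring R] (c : ι → R) (f : ι → n → R) :
    ∑ i, c i • vecMulVec (f i) (f i) = (of f)ᵀ * diagonal c * of f := by
  ext j k
  simp [sum_apply, mul_apply, vecMulVec_apply, diagonal_apply, mul_assoc, mul_left_comm]

lemma transpose_mul_diagonal_mul_self [CommSemiring R] (F : Matrix ι n R) (d : ι → R) :
    (Fᵀ * diagonal d * F)ᵀ = Fᵀ * diagonal d * F := by
  rw [transpose_mul, transpose_mul, diagonal_transpose, transpose_transpose, Matrix.mul_assoc]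

variable [Fintype n] [DecidableEq n]

theorem inv_mul_mul_inv_sub_inv_eq_transpose_mul_diagonal_mul [CommRing R] (F : Matrix ι n R)
    (lam s t : ι → R) (M₁ M : Matrix n n R) (hM₁ : M₁ = Fᵀ * diagonal (lam * s * t) * F)
    (hM : M = Fᵀ * diagonal (lam * t * t) * F) (hM₁inv : IsUnit M₁.det) (hMinv : IsUnit M.det) :
    M₁⁻¹ * (Fᵀ * diagonal (lam * s * s) * F) * M₁⁻¹ - M⁻¹ =
      (diagonal s * F * M₁⁻¹ - diagonal t * F * M⁻¹)ᵀ * diagonal lam *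
        (diagonal s * F * M₁⁻¹ - diagonal t * F * M⁻¹) := by
  have hM₁t : M₁⁻¹ᵀ = M₁⁻¹ := by
    rw [transpose_nonsing_inv, hM₁, transpose_mul_diagonal_mul_self]
  have hMt : M⁻¹ᵀ = M⁻¹ := by
    rw [transpose_nonsing_inv, hM, transpose_mul_diagonal_mul_self]
  have hdiag (a b : ι → R) : diagonal a * diagonal lam * diagonal b = diagonal (lam * a * b) := by
    rw [diagonal_mul_diagonal, diagonal_mul_diagonal]
    congr 1; funext i; simp only [Pi.mul_apply]; ring
  have key : (diagonal s * F * M₁⁻¹ - diagonal t * F * M⁻¹)ᵀ * diagonal lam *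
        (diagonal s * F * M₁⁻¹ - diagonal t * F * M⁻¹) =
      M₁⁻¹ * (Fᵀ * (diagonal s * diagonal lam * diagonal s) * F) * M₁⁻¹
        - M₁⁻¹ * (Fᵀ * (diagonal s * diagonal lam * diagonal t) * F) * M⁻¹
        - M⁻¹ * (Fᵀ * (diagonal t * diagonal lam * diagonal s) * F) * M₁⁻¹
        + M⁻¹ * (Fᵀ * (diagonal t * diagonal lam * diagonal t) * F) * M⁻¹ := by
    simp only [transpose_sub, transpose_mul, diagonal_transpose, hM₁t, hMt, Matrix.sub_mul,
      Matrix.mul_sub, Matrix.mul_assoc]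
    abel
  rw [key, hdiag, hdiag, hdiag, hdiag, mul_right_comm lam t s, ← hM₁, ← hM,
    nonsing_inv_mul _ hM₁inv, nonsing_inv_mul _ hMinv, Matrix.mul_assoc M⁻¹ M₁,
    mul_nonsing_inv _ hM₁inv]
  simp only [Matrix.one_mul, Matrix.mul_one]
  abel

theorem posSemidef_inv_mul_mul_inv_sub_inv [CommRing R] [PartialOrder R] [StarRing R]
    [TrivialStar R] [StarOrderedRing R] (F : Matrix ι n R) (lam s t : ι → R) (hlam : 0 ≤ lam)
    (M₁ M : Matrix n n R) (hM₁ : M₁ = Fᵀ * diagonal (lam * s * t) * F)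
    (hM : M = Fᵀ * diagonal (lam * t * t) * F) (hM₁inv : IsUnit M₁.det) (hMinv : IsUnit M.det) :
    (M₁⁻¹ * (Fᵀ * diagonal (lam * s * s) * F) * M₁⁻¹ - M⁻¹).PosSemidef := by
  rw [inv_mul_mul_inv_sub_inv_eq_transpose_mul_diagonal_mul F lam s t M₁ M hM₁ hM
    hM₁inv hMinv, ← conjTranspose_eq_transpose_of_trivial]
  exact (PosSemidef.diagonal hlam).conjTranspose_mul_mul_same _

lemma inv_mul_smul_mul_inv [CommRing R] (A : Matrix n n R) (hA : IsUnit A.det) (c : R) :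
    A⁻¹ * (c • A) * A⁻¹ = c • A⁻¹ := by
  rw [Matrix.mul_smul, nonsing_inv_mul _ hA, Matrix.smul_mul, Matrix.one_mul]

end Matrix

theorem weightedLS_covariance_ge_optimal_general
    {p m : ℕ} (f : Fin m → Fin p → ℝ) (lam w σ : Fin m → ℝ)
    (hlam : ∀ i, 0 ≤ lam i)
    (hσ : ∀ i, 0 < σ i)
    (M₁ M₂ M : Matrix (Fin p) (Fin p) ℝ)
    (hM₁ : M₁ = ∑ i, (lam i * w i) • vecMulVec (f i) (f i))
    (hM₂ : M₂ = ∑ i, (lam i * w i ^ 2 * σ i ^ 2) • vecMulVec (f i) (f i))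
    (hM : M = ∑ i, (lam i / σ i ^ 2) • vecMulVec (f i) (f i))
    (hM₁inv : IsUnit M₁.det) (hMinv : IsUnit M.det) :
    (M₁⁻¹ * M₂ * M₁⁻¹ - M⁻¹).PosSemidef ∧
    ((∃ c : ℝ, 0 < c ∧ ∀ i, w i = c / σ i ^ 2) → M₁⁻¹ * M₂ * M₁⁻¹ = M⁻¹) := by
  have hσ₀ (i : Fin m) : σ i ≠ 0 := (hσ i).ne'
  constructor
  · rw [sum_smul_vecMulVec_self_eq] at hM₁ hM₂ hM
    let s i := w i * σ i
    let t i := (σ i)⁻¹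
    have hst : (fun i => lam i * w i) = lam * s * t := by
      funext i; simp only [Pi.mul_apply, s, t]; field_simp [hσ₀ i]
    have hss : (fun i => lam i * w i ^ 2 * σ i ^ 2) = lam * s * s := by
      funext i; simp only [Pi.mul_apply, s]; ring
    have htt : (fun i => lam i / σ i ^ 2) = lam * t * t := by
      funext i; simp only [Pi.mul_apply, t]; field_simp
    rw [hst] at hM₁
    rw [htt] at hM
    rw [hM₂, hss]
    exact posSemidef_inv_mul_mul_inv_sub_inv (of f) lam s t hlam M₁ M hM₁ hM hM₁inv hMinv
  · rintro ⟨c, hc, hwc⟩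
    have hM₁c : M₁ = c • M := by
      simp_rw [hM₁, hM, Finset.smul_sum, smul_smul, hwc]
      refine Finset.sum_congr rfl fun i _ => congrArg (· • _) ?_
      ring
    have hM₂c : M₂ = c • M₁ := by
      simp_rw [hM₂, hM₁, Finset.smul_sum, smul_smul, hwc]
      refine Finset.sum_congr rfl fun i _ => congrArg (· • _) ?_
      field_simp [hσ₀ i]
    have := invertibleOfNonzero hc.ne'
    rw [hM₂c, inv_mul_smul_mul_inv M₁ hM₁inv, hM₁c, Matrix.inv_smul M c hMinv, smul_smul,
      mul_invOf_self, one_smul]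

/-- Optimality of the optimally-weighted LS estimator: with
`M₁ = ∑ λᵢ wᵢ fᵢfᵢᵀ`, `M₂ = ∑ λᵢ wᵢ²σᵢ² fᵢfᵢᵀ`, `M = ∑ λᵢ σᵢ⁻² fᵢfᵢᵀ` invertible,
the asymptotic covariance `C = M₁⁻¹ M₂ M₁⁻¹` satisfies `C − M⁻¹ ⪰ 0`, with equality
`C = M⁻¹` when `wᵢ = c σᵢ⁻²` for some constant `c > 0`. -/
theorem weightedLS_covariance_ge_optimal
    {p m : ℕ} (f : Fin m → Fin p → ℝ) (lam w σ : Fin m → ℝ)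
    (hlam : ∀ i, 0 ≤ lam i) (hsum : ∑ i, lam i = 1)
    (hw : ∀ i, 0 < w i) (hσ : ∀ i, 0 < σ i)
    (M₁ M₂ M : Matrix (Fin p) (Fin p) ℝ)
    (hM₁ : M₁ = ∑ i, (lam i * w i) • vecMulVec (f i) (f i))
    (hM₂ : M₂ = ∑ i, (lam i * w i ^ 2 * σ i ^ 2) • vecMulVec (f i) (f i))
    (hM : M = ∑ i, (lam i / σ i ^ 2) • vecMulVec (f i) (f i))
    (hM₁inv : IsUnit M₁.det) (hMinv : IsUnit M.det) :
    (M₁⁻¹ * M₂ * M₁⁻¹ - M⁻¹).PosSemidef ∧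
    ((∃ c : ℝ, 0 < c ∧ ∀ i, w i = c / σ i ^ 2) → M₁⁻¹ * M₂ * M₁⁻¹ = M⁻¹) :=
  weightedLS_covariance_ge_optimal_general f lam w σ hlam hσ M₁ M₂ M hM₁ hM₂ hM hM₁inv hMinv
end

section
/- Let T > 0, θ̄ ∈ ℝ, x₀ ∈ ℝ, and let (u_i)_{i≥0} be a deterministic real sequence. Define x_{i+1} = x_i + T[u_i + θ̄(x_i + 1)], and let y_i = x_i + ε_i where (ε_i)_{i≥1} are independent square-integrable real random variables with E[ε_i] = 0 and E[ε_i²] = σ². Then for every i ≥ 1, the corrected function g'_{i+1}(θ̄) = (1 + y_i) g_{i+1}(θ̄) + σ²(1 + Tθ̄), where g_{i+1}(θ) = y_{i+1} − y_i − T[u_i + θ(y_i + 1)], satisfies E[g'_{i+1}(θ̄)] = 0. -/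
/-!
At the true parameter the dynamics cancel from the basic estimating function, leaving
`g_{i+1} = ε_{i+1} − (1 + Tθ) ε_i`. Multiplying by `1 + y_i = (1 + x_i) + ε_i`, every term
has mean zero by independence and centring, except `−(1 + Tθ) ε_i²`, whose mean
`−(1 + Tθ) σ²` is exactly what the correction adds back.
-/

open MeasureTheory ProbabilityTheory

theorem ProbabilityTheory.IndepFun.integral_mul_eq_zero {Ω : Type*} [MeasurableSpace Ω]
    {P : Measure Ω} {X Y : Ω → ℝ} (hXY : IndepFun X Y P) (hX : Integrable X P)
    (hY : Integrable Y P) (hYm : ∫ ω, Y ω ∂P = 0) :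
    ∫ ω, X ω * Y ω ∂P = 0 := by
  have := hXY.integral_mul_eq_mul_integral hX.aestronglyMeasurable hY.aestronglyMeasurable
  simp_all

theorem ProbabilityTheory.IndepFun.integral_add_mul_sub_mul_add_eq_zero {Ω : Type*}
    [MeasurableSpace Ω] {P : Measure Ω} [IsProbabilityMeasure P] {X Y : Ω → ℝ}
    (hXY : IndepFun X Y P) (hX : Integrable X P) (hY : Integrable Y P)
    (hX2 : Integrable (fun ω => X ω ^ 2) P) (hXm : ∫ ω, X ω ∂P = 0)
    (hYm : ∫ ω, Y ω ∂P = 0) (a c : ℝ) {s : ℝ} (hs : ∫ ω, X ω ^ 2 ∂P = s) :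
    ∫ ω, ((a + X ω) * (Y ω - c * X ω) + c * s) ∂P = 0 := by
  have hXYi : Integrable (fun ω => X ω * Y ω) P := hXY.integrable_mul hX hY
  calc ∫ ω, ((a + X ω) * (Y ω - c * X ω) + c * s) ∂P
      = ∫ ω, (a * Y ω - a * c * X ω + X ω * Y ω - c * X ω ^ 2 + c * s) ∂P := by
        congr 1; ext ω; ring
    _ = a * ∫ ω, Y ω ∂P - a * c * ∫ ω, X ω ∂P + ∫ ω, X ω * Y ω ∂P
          - c * ∫ ω, X ω ^ 2 ∂P + c * s := by
        rw [integral_add, integral_sub, integral_add, integral_sub, integral_const_mul,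
          integral_const_mul, integral_const_mul, integral_const]
        · simp
        all_goals fun_prop
    _ = 0 := by rw [hXm, hYm, hXY.integral_mul_eq_zero hX hY hYm, hs]; ring

theorem corrected_estimating_function_unbiased_general
    {Ω : Type*} [MeasurableSpace Ω] (P : Measure Ω) [IsProbabilityMeasure P]
    (T θ σ : ℝ) (u : ℕ → ℝ) (x : ℕ → ℝ)
    (hx : ∀ i, x (i + 1) = x i + T * (u i + θ * (x i + 1)))
    (ε : ℕ → Ω → ℝ)
    (hindep : iIndepFun ε P)
    (hint : ∀ i, 1 ≤ i → Integrable (ε i) P)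
    (hintsq : ∀ i, 1 ≤ i → Integrable (fun ω => ε i ω ^ 2) P)
    (hmean : ∀ i, 1 ≤ i → ∫ ω, ε i ω ∂P = 0)
    (hvar : ∀ i, 1 ≤ i → ∫ ω, ε i ω ^ 2 ∂P = σ ^ 2)
    (y : ℕ → Ω → ℝ)
    (hy : ∀ i, 1 ≤ i → ∀ ω, y i ω = x i + ε i ω) :
    ∀ i, 1 ≤ i →
      ∫ ω, ((1 + y i ω) *
          (y (i + 1) ω - y i ω - T * (u i + θ * (y i ω + 1)))
          + σ ^ 2 * (1 + T * θ)) ∂P = 0 := by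
  intro i hi
  have hi' : 1 ≤ i + 1 := by omega
  have integrand_eq : ∀ ω, (1 + y i ω) * (y (i + 1) ω - y i ω - T * (u i + θ * (y i ω + 1)))
        + σ ^ 2 * (1 + T * θ)
      = ((1 + x i) + ε i ω) * (ε (i + 1) ω - (1 + T * θ) * ε i ω)
        + (1 + T * θ) * σ ^ 2 := by
    intro ω
    rw [hy i hi, hy (i + 1) hi', hx i]
    ring
  simp_rw [integrand_eq]
  exact (hindep.indepFun (by omega)).integral_add_mul_sub_mul_add_eq_zero (hint i hi)
    (hint (i + 1) hi') (hintsq i hi) (hmean i hi) (hmean (i + 1) hi') _ _ (hvar i hi)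

/-- The bias-corrected nonlinear estimating function
`g'_{i+1}(θ̄) = (1 + y_i) g_{i+1}(θ̄) + σ²(1 + Tθ̄)`, with
`g_{i+1}(θ) = y_{i+1} − y_i − T[u_i + θ(y_i+1)]`, is unbiased at the true parameter
when the errors are independent, zero-mean, with variance σ². -/
theorem corrected_estimating_function_unbiased
    {Ω : Type*} [MeasurableSpace Ω] (P : Measure Ω) [IsProbabilityMeasure P]
    (T θ x₀ σ : ℝ) (hT : 0 < T) (u : ℕ → ℝ) (x : ℕ → ℝ)
    (hx₀ : x 0 = x₀)
    (hx : ∀ i, x (i + 1) = x i + T * (u i + θ * (x i + 1)))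
    (ε : ℕ → Ω → ℝ)
    (hmeas : ∀ i, Measurable (ε i))
    (hindep : iIndepFun ε P)
    (hint : ∀ i, 1 ≤ i → Integrable (ε i) P)
    (hintsq : ∀ i, 1 ≤ i → Integrable (fun ω => ε i ω ^ 2) P)
    (hmean : ∀ i, 1 ≤ i → ∫ ω, ε i ω ∂P = 0)
    (hvar : ∀ i, 1 ≤ i → ∫ ω, ε i ω ^ 2 ∂P = σ ^ 2)
    (y : ℕ → Ω → ℝ)
    (hy₀ : ∀ ω, y 0 ω = x₀)
    (hy : ∀ i, 1 ≤ i → ∀ ω, y i ω = x i + ε i ω) :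
    ∀ i, 1 ≤ i →
      ∫ ω, ((1 + y i ω) *
          (y (i + 1) ω - y i ω - T * (u i + θ * (y i ω + 1)))
          + σ ^ 2 * (1 + T * θ)) ∂P = 0 :=
  corrected_estimating_function_unbiased_general P T θ σ u x hx ε hindep hint hintsq hmean hvar y hy
end
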